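/- arXiv:1411.6685 — 3 statements merged into one kernel-verified Lean document; each statement's English description precedes it below -/
import Mathlib

section
/- For x ∈ ℝ^N with transformed variables x_i = e^{x̃_i}, the function x̃ ↦ log X(e^{x̃}) is convex, where X(x) = T_e + Σ_{j=1}^N T_{s,j} x_j ∏_{k=1}^{j-1} (1 + x_k), with constants T_e > 0 and T_{s,j} > 0. -/
/-!
Call `f > 0` log-convex when `f (a • x + b • y) ≤ f x ^ a * f y ^ b` for convex weights `a, b`.
This multiplicative form of the convexity of `log ∘ f` is visibly stable under products, and
under sums by the two-term Hölder inequality. Constants and `exp` of a coordinate are log-convex,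
and `Te + ∑ j, Ts j * e^{x̃ j} * ∏_{k<j} (1 + e^{x̃ k})` is built from them by sums and products.
-/

open Real

namespace Real

theorem rpow_mul_rpow_add_rpow_mul_rpow_le {A B C D t s : ℝ} (hA : 0 < A) (hB : 0 < B)
    (hC : 0 < C) (hD : 0 < D) (ht : 0 ≤ t) (hs : 0 ≤ s) (hts : t + s = 1) :
    A ^ t * C ^ s + B ^ t * D ^ s ≤ (A + B) ^ t * (C + D) ^ s := by
  set P := A + B
  set Q := C + D
  have hP : 0 < P := by positivity
  have hQ : 0 < Q := by positivity
  -- factor out `P ^ t * Q ^ s` and apply weighted AM-GM to each normalised term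
  have term {X Y : ℝ} (hX : 0 < X) (hY : 0 < Y) :
      X ^ t * Y ^ s ≤ P ^ t * Q ^ s * (t * (X / P) + s * (Y / Q)) := by
    calc X ^ t * Y ^ s = P ^ t * Q ^ s * ((X / P) ^ t * (Y / Q) ^ s) := by
          rw [div_rpow hX.le hP.le, div_rpow hY.le hQ.le]
          field_simp
      _ ≤ P ^ t * Q ^ s * (t * (X / P) + s * (Y / Q)) := by
          gcongr
          exact geom_mean_le_arith_mean2_weighted ht hs (by positivity) (by positivity) hts
  calc A ^ t * C ^ s + B ^ t * D ^ s
      ≤ P ^ t * Q ^ s * (t * (A / P) + s * (C / Q)) + P ^ t * Q ^ s * (t * (B / P) + s * (D / Q)) :=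
        add_le_add (term hA hC) (term hB hD)
    _ = P ^ t * Q ^ s * (t * (P / P) + s * (Q / Q)) := by ring
    _ = P ^ t * Q ^ s := by rw [div_self hP.ne', div_self hQ.ne', mul_one, mul_one, hts, mul_one]

end Real

variable {E : Type*} [AddCommMonoid E] [Module ℝ E] {s : Set E} {f g : E → ℝ}

structure LogConvexOn (s : Set E) (f : E → ℝ) : Prop where
  convex : Convex ℝ s
  pos : ∀ x ∈ s, 0 < f x
  le_rpow_mul_rpow : ∀ ⦃x⦄, x ∈ s → ∀ ⦃y⦄, y ∈ s → ∀ ⦃a b : ℝ⦄, 0 ≤ a → 0 ≤ b → a + b = 1 →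
    f (a • x + b • y) ≤ f x ^ a * f y ^ b

namespace LogConvexOn

theorem const (hs : Convex ℝ s) {c : ℝ} (hc : 0 < c) : LogConvexOn s fun _ => c := by
  refine ⟨hs, fun _ _ => hc, fun x _ y _ a b _ _ hab => ?_⟩
  rw [← rpow_add hc, hab, rpow_one]

theorem _root_.ConvexOn.logConvexOn_exp (hg : ConvexOn ℝ s g) :
    LogConvexOn s fun x => exp (g x) := by
  refine ⟨hg.1, fun _ _ => exp_pos _, fun x hx y hy a b ha hb hab => ?_⟩
  calc exp (g (a • x + b • y)) ≤ exp (a * g x + b * g y) :=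
        exp_le_exp.mpr (hg.2 hx hy ha hb hab)
    _ = exp (g x) ^ a * exp (g y) ^ b := by rw [exp_add, mul_comm a, mul_comm b, exp_mul, exp_mul]

theorem mul (hf : LogConvexOn s f) (hg : LogConvexOn s g) :
    LogConvexOn s fun x => f x * g x := by
  refine ⟨hf.convex, fun x hx => mul_pos (hf.pos x hx) (hg.pos x hx),
    fun x hx y hy a b ha hb hab => ?_⟩
  have hfx := hf.pos x hx
  have hfy := hf.pos y hy
  have hgx := hg.pos x hx
  have hgy := hg.pos y hy
  calc f (a • x + b • y) * g (a • x + b • y)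
      ≤ (f x ^ a * f y ^ b) * (g x ^ a * g y ^ b) :=
        mul_le_mul (hf.le_rpow_mul_rpow hx hy ha hb hab) (hg.le_rpow_mul_rpow hx hy ha hb hab)
          (hg.pos _ (hf.convex hx hy ha hb hab)).le (by positivity)
    _ = (f x * g x) ^ a * (f y * g y) ^ b := by
        rw [mul_rpow hfx.le hgx.le, mul_rpow hfy.le hgy.le]
        ring

theorem add (hf : LogConvexOn s f) (hg : LogConvexOn s g) :
    LogConvexOn s fun x => f x + g x := by
  refine ⟨hf.convex, fun x hx => add_pos (hf.pos x hx) (hg.pos x hx),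
    fun x hx y hy a b ha hb hab => ?_⟩
  calc f (a • x + b • y) + g (a • x + b • y)
      ≤ f x ^ a * f y ^ b + g x ^ a * g y ^ b :=
        add_le_add (hf.le_rpow_mul_rpow hx hy ha hb hab) (hg.le_rpow_mul_rpow hx hy ha hb hab)
    _ ≤ (f x + g x) ^ a * (f y + g y) ^ b :=
        rpow_mul_rpow_add_rpow_mul_rpow_le (hf.pos x hx) (hg.pos x hx) (hf.pos y hy)
          (hg.pos y hy) ha hb hab

theorem prod {ι : Type*} {t : Finset ι} {F : ι → E → ℝ} (hs : Convex ℝ s)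
    (hF : ∀ i ∈ t, LogConvexOn s (F i)) : LogConvexOn s fun x => ∏ i ∈ t, F i x := by
  classical
  induction t using Finset.induction_on with
  | empty => simpa using const hs one_pos
  | insert i t hi ih =>
    simp only [Finset.prod_insert hi]
    exact (hF i (t.mem_insert_self i)).mul (ih fun j hj => hF j (Finset.mem_insert_of_mem hj))

theorem add_sum {ι : Type*} {t : Finset ι} {F : ι → E → ℝ} (hf : LogConvexOn s f)
    (hF : ∀ i ∈ t, LogConvexOn s (F i)) : LogConvexOn s fun x => f x + ∑ i ∈ t, F i x := by
  classical
  induction t using Finset.induction_on with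
  | empty => simpa using hf
  | insert i t hi ih =>
    simp only [Finset.sum_insert hi, add_left_comm (f _)]
    exact (hF i (t.mem_insert_self i)).add (ih fun j hj => hF j (Finset.mem_insert_of_mem hj))

theorem convexOn_log (hf : LogConvexOn s f) : ConvexOn ℝ s fun x => log (f x) := by
  refine ⟨hf.convex, fun x hx y hy a b ha hb hab => ?_⟩
  have hfx := hf.pos x hx
  have hfy := hf.pos y hy
  calc log (f (a • x + b • y)) ≤ log (f x ^ a * f y ^ b) :=
        log_le_log (hf.pos _ (hf.convex hx hy ha hb hab)) (hf.le_rpow_mul_rpow hx hy ha hb hab)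
    _ = a • log (f x) + b • log (f y) := by
        rw [log_mul (by positivity) (by positivity), log_rpow hfx, log_rpow hfy, smul_eq_mul,
          smul_eq_mul]

end LogConvexOn

/-- `xt ↦ log X(e^{xt})` is convex, where
`X(x) = T_e + ∑_j T_{s,j} x_j ∏_{k<j} (1 + x_k)`. -/
theorem log_X_exp_convex (N : ℕ) (Te : ℝ) (Ts : Fin N → ℝ)
    (hTe : 0 < Te) (hTs : ∀ j, 0 < Ts j) :
    ConvexOn ℝ Set.univ
      (fun xt : Fin N → ℝ =>
        Real.log (Te + ∑ j, Ts j * Real.exp (xt j) *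
          ∏ k ∈ Finset.univ.filter (· < j), (1 + Real.exp (xt k)))) := by
  have exp_coord (j : Fin N) : LogConvexOn Set.univ fun xt : Fin N → ℝ => exp (xt j) :=
    ((LinearMap.proj j : (Fin N → ℝ) →ₗ[ℝ] ℝ).convexOn convex_univ).logConvexOn_exp
  refine LogConvexOn.convexOn_log (.add_sum (.const convex_univ hTe) fun j _ => ?_)
  exact ((LogConvexOn.const convex_univ (hTs j)).mul (exp_coord j)).mul
    (.prod convex_univ fun k _ => (LogConvexOn.const convex_univ one_pos).add (exp_coord k))
end

section
/- The total airtime of station i, defined as T_i·T_slot = τ_i(1-p_{n,i})∏_{j≠i}(1-τ_j)T_{s,i} + τ_i p_{n,i} ∏_{j≠i}(1-τ_j) T_{s,i} + τ_i (1-∏_{j=1}^{i-1}(1-τ_j)) ∏_{j=i+1}^N (1-τ_j) T_{s,i} + τ_i Σ_{j=i+1}^N τ_j ∏_{k=j+1}^N (1-τ_k) T_{s,j}, simplifies to τ_i ( ∏_{j=i+1}^N (1-τ_j) T_{s,i} + Σ_{j=i+1}^N τ_j ∏_{k=j+1}^N (1-τ_k) T_{s,j} ), which is independent of the link-error probabilities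 p_{n,i}. -/
/-! The successful and the noise-corrupted terms add up to `τ i · ∏_{j ≠ i} (1 - τ j) · T_{s,i}`,
so `p_{n,i}` cancels. Splitting `∏_{j ≠ i}` into the product over the lower-indexed stations `L`
times the product over the higher-indexed ones `R`, the first three terms become
`τ i · (L R + (1 - L) R) · T_{s,i} = τ i · R · T_{s,i}`. -/

theorem Finset.prod_filter_ne_eq_prod_filter_lt_mul_prod_filter_gt {α M : Type*} [LinearOrder α]
    [CommMonoid M] (s : Finset α) (f : α → M) (i : α) :
    ∏ j ∈ s.filter (· ≠ i), f j = (∏ j ∈ s.filter (· < i), f j) * ∏ j ∈ s.filter (i < ·), f j := by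
  rw [← Finset.prod_union (Finset.disjoint_filter_filter' _ _ fun _ hlt hgt j hj =>
    lt_asymm (hlt j hj) (hgt j hj)), ← Finset.filter_or]
  simp only [ne_iff_lt_or_gt]

theorem airtime_simplification_general (N : ℕ) (τ pn Ts : Fin N → ℝ) (i : Fin N) :
    τ i * (1 - pn i) * (∏ j ∈ Finset.univ.filter (· ≠ i), (1 - τ j)) * Ts i +
    τ i * pn i * (∏ j ∈ Finset.univ.filter (· ≠ i), (1 - τ j)) * Ts i +
    τ i * (1 - ∏ j ∈ Finset.univ.filter (· < i), (1 - τ j)) *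
      (∏ j ∈ Finset.univ.filter (i < ·), (1 - τ j)) * Ts i +
    τ i * ∑ j ∈ Finset.univ.filter (i < ·),
      τ j * (∏ k ∈ Finset.univ.filter (j < ·), (1 - τ k)) * Ts j =
    τ i * ((∏ j ∈ Finset.univ.filter (i < ·), (1 - τ j)) * Ts i +
      ∑ j ∈ Finset.univ.filter (i < ·),
        τ j * (∏ k ∈ Finset.univ.filter (j < ·), (1 - τ k)) * Ts j) := by
  rw [Finset.prod_filter_ne_eq_prod_filter_lt_mul_prod_filter_gt]
  ring

/-- The four-term total-airtime expression of station `i` simplifies to a form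
independent of the link-error probabilities `p_{n,i}`. -/
theorem airtime_simplification (N : ℕ) (τ pn Ts : Fin N → ℝ)
    (hτ : ∀ i, τ i ∈ Set.Icc (0 : ℝ) 1) (hpn : ∀ i, pn i ∈ Set.Icc (0 : ℝ) 1)
    (hTs : Monotone Ts) (i : Fin N) :
    τ i * (1 - pn i) * (∏ j ∈ Finset.univ.filter (· ≠ i), (1 - τ j)) * Ts i +
    τ i * pn i * (∏ j ∈ Finset.univ.filter (· ≠ i), (1 - τ j)) * Ts i +
    τ i * (1 - ∏ j ∈ Finset.univ.filter (· < i), (1 - τ j)) *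
      (∏ j ∈ Finset.univ.filter (i < ·), (1 - τ j)) * Ts i +
    τ i * ∑ j ∈ Finset.univ.filter (i < ·),
      τ j * (∏ k ∈ Finset.univ.filter (j < ·), (1 - τ k)) * Ts j =
    τ i * ((∏ j ∈ Finset.univ.filter (i < ·), (1 - τ j)) * Ts i +
      ∑ j ∈ Finset.univ.filter (i < ·),
        τ j * (∏ k ∈ Finset.univ.filter (j < ·), (1 - τ k)) * Ts j) :=
  airtime_simplification_general N τ pn Ts i
end

section
/- If all stations have equal transmission durations T_{s,i} = T_s and the equal-airtime condition T_i = 1/N holds for all i, then all transformed attempt rates are equal: x_1 = x_2 = … = x_N (equivalently τ_1 = … = τ_N). -/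
/-!
Multiplying the airtime equation of station `i` by `1 + xᵢ` telescopes the bracket into
`T_s ∏ₖ (1 + xₖ)`, the same for every station. Hence `N c xᵢ = 1 + xᵢ` with `c = T_s ∏ₖ (1 + xₖ) / X`
independent of `i`, i.e. `xᵢ (N c - 1) = 1`, which pins every `xᵢ` to the same value.
-/

open Finset

section Telescoping

variable {ι R : Type*} [Fintype ι] [LinearOrder ι] [CommRing R]

theorem prod_one_add_eq_prod_le_add_sum (f : ι → R) (a : ι) :
    ∏ k, (1 + f k) = ∏ k ∈ univ.filter (· ≤ a), (1 + f k) +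
      ∑ j ∈ univ.filter (a < ·), f j * ∏ k ∈ univ.filter (· < j), (1 + f k) := by
  have hle : ∏ k ∈ univ.filter (· ≤ a), (1 + f k) =
      1 + ∑ j ∈ univ.filter (· ≤ a), f j * ∏ k ∈ univ.filter (· < j), (1 + f k) := by
    rw [prod_one_add_ordered]
    congr 1
    refine sum_congr rfl fun j hj => ?_
    rw [filter_filter]
    congr 2
    ext k
    have : j ≤ a := (mem_filter.mp hj).2
    simp only [mem_filter, mem_univ, true_and]
    exact ⟨fun h => h.2, fun h => ⟨h.le.trans this, h⟩⟩
  rw [hle, prod_one_add_ordered, add_assoc, ← sum_filter_add_sum_filter_not univ (· ≤ a)]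
  simp only [not_le]

theorem prod_one_add_eq_airtime_bracket_mul (f : ι → R) (i : ι) :
    ∏ k, (1 + f k) = (∏ k ∈ univ.filter (· < i), (1 + f k) +
      ∑ j ∈ univ.filter (i < ·), f j * ∏ k ∈ univ.filter (fun k => k < j ∧ k ≠ i), (1 + f k)) *
        (1 + f i) := by
  have herase : ∀ j, i < j → (∏ k ∈ univ.filter (fun k => k < j ∧ k ≠ i), (1 + f k)) * (1 + f i) =
      ∏ k ∈ univ.filter (· < j), (1 + f k) := by
    intro j hij
    have : univ.filter (fun k => k < j ∧ k ≠ i) = (univ.filter (· < j)).erase i := by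
      ext k
      simp only [mem_filter, mem_univ, true_and, mem_erase]
      tauto
    rw [this, prod_erase_mul _ _ (by simpa using hij)]
  have hle : ∏ k ∈ univ.filter (· ≤ i), (1 + f k) =
      (∏ k ∈ univ.filter (· < i), (1 + f k)) * (1 + f i) := by
    rw [← mul_prod_erase _ _ (by simp : i ∈ univ.filter (· ≤ i)), mul_comm]
    congr 2
    ext k
    simp only [mem_filter, mem_univ, true_and, mem_erase, lt_iff_le_and_ne]
    tauto
  rw [prod_one_add_eq_prod_le_add_sum f i, hle, add_mul, sum_mul]
  congr 1
  refine sum_congr rfl fun j hj => ?_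
  rw [mul_assoc, herase j (mem_filter.mp hj).2]

end Telescoping

theorem equal_airtime_symmetric_general (N : ℕ) (Ts : ℝ)
    (x : Fin N → ℝ)
    (X : ℝ)
    (hT : ∀ i : Fin N,
      (x i / X) * (Ts * (∏ j ∈ Finset.univ.filter (· < i), (1 + x j)) +
        ∑ j ∈ Finset.univ.filter (i < ·), Ts * x j *
          ∏ k ∈ Finset.univ.filter (fun k => k < j ∧ k ≠ i), (1 + x k)) =
      1 / (N : ℝ)) :
    ∀ i j, x i = x j := by
  intro i j
  have hN : (N : ℝ) ≠ 0 := Nat.cast_ne_zero.mpr (Fin.pos i).ne'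
  set Q := ∏ k, (1 + x k)
  have hlin : ∀ k, x k * (N * (Ts * Q / X) - 1) = 1 := by
    intro k
    have h := congrArg (· * (1 + x k)) (hT k)
    simp only [mul_assoc, ← mul_sum, ← mul_add] at h
    rw [← prod_one_add_eq_airtime_bracket_mul] at h
    calc x k * (N * (Ts * Q / X) - 1) = N * (x k / X * (Ts * Q)) - x k := by ring
      _ = N * (1 / N * (1 + x k)) - x k := by rw [h]
      _ = 1 := by field_simp; ring
  exact mul_right_cancel₀ (right_ne_zero_of_mul_eq_one (hlin i)) ((hlin i).trans (hlin j).symm)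

/-- If all stations have equal transmission durations and all airtime fractions
equal `1/N`, then all transformed attempt rates are equal. -/
theorem equal_airtime_symmetric (N : ℕ) (Te Ts : ℝ)
    (hTe : 0 < Te) (hTs : 0 < Ts)
    (x : Fin N → ℝ) (hx : ∀ j, 0 < x j)
    (X : ℝ) (hX : X = Te + ∑ j, Ts * x j *
      ∏ k ∈ Finset.univ.filter (· < j), (1 + x k))
    (hT : ∀ i : Fin N,
      (x i / X) * (Ts * (∏ j ∈ Finset.univ.filter (· < i), (1 + x j)) +
        ∑ j ∈ Finset.univ.filter (i < ·), Ts * x j *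
          ∏ k ∈ Finset.univ.filter (fun k => k < j ∧ k ≠ i), (1 + x k)) =
      1 / (N : ℝ)) :
    ∀ i j, x i = x j :=
  equal_airtime_symmetric_general N Ts x X hT
end
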